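/- Let G be a directed mixed graph and i, j two nodes of G. If i ∈ an(G,j), then there exists an acyclification G' of G such that i ∈ an(G',j). -/
import Mathlib


namespace CausalGraphs

variable {V : Type*}

/-- A directed mixed graph (DMG): directed edges `dir` (`i → j`) and
bidirected edges `bi` (`i ↔ j`), with no self-loops. -/
structure DMG (V : Type*) where
  dir : V → V → Prop
  bi : V → V → Prop
  dir_irrefl : ∀ i, ¬ dir i i
  bi_irrefl : ∀ i, ¬ bi i i

namespace DMG

/-- `G.Anc i j`: `i ∈ an(G, j)`, i.e. there is a (possibly trivial) directed path
from `i` to `j` in `G`. -/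
def Anc (G : DMG V) (i j : V) : Prop :=
  Relation.ReflTransGen G.dir i j

/-- `G.Scc i j`: `i ∈ scc(G, j)`, i.e. `i` and `j` lie in the same strongly
connected component of `G`. -/
def Scc (G : DMG V) (i j : V) : Prop :=
  G.Anc i j ∧ G.Anc j i

/-- There is a bidirected edge between `i` and `j` (bidirected edges are unordered). -/
def BiEdge (G : DMG V) (i j : V) : Prop :=
  G.bi i j ∨ G.bi j i

/-- `G` has no directed cycle (i.e. `G` is an ADMG). -/
def Acyclic (G : DMG V) : Prop :=
  ∀ i j, G.dir i j → ¬ G.Anc j i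

end DMG

/-- A walk of length `len` is recorded by its vertices `vert 0, …, vert len` and,
for each edge index `k < len`, the edge marks: `intoL k` (resp. `intoR k`) is `true`
iff the `k`-th edge has an arrowhead at `vert k` (resp. at `vert (k+1)`). -/
structure Walk (V : Type*) where
  len : ℕ
  vert : ℕ → V
  intoL : ℕ → Bool
  intoR : ℕ → Bool

namespace Walk

def first (w : Walk V) : V := w.vert 0

def last (w : Walk V) : V := w.vert w.len

/-- The walk is an actual walk in a DMG `G`: each step traverses a directed edge
(in either direction) or a bidirected edge of `G`, with the corresponding marks. -/
def ValidOn (G : DMG V) (w : Walk V) : Prop :=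
  ∀ k, k < w.len →
    (w.intoL k = false ∧ w.intoR k = true ∧ G.dir (w.vert k) (w.vert (k+1))) ∨
    (w.intoL k = true ∧ w.intoR k = false ∧ G.dir (w.vert (k+1)) (w.vert k)) ∨
    (w.intoL k = true ∧ w.intoR k = true ∧ G.BiEdge (w.vert k) (w.vert (k+1)))

/-- `k` is a non-endpoint position of the walk. -/
def Interior (w : Walk V) (k : ℕ) : Prop := 0 < k ∧ k < w.len

/-- The non-endpoint node `vert k` is a collider on the walk: both adjacent
edges have an arrowhead at it. -/
def ColliderAt (w : Walk V) (k : ℕ) : Prop :=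
  w.Interior k ∧ w.intoR (k-1) = true ∧ w.intoL k = true

/-- The non-endpoint node `vert k` is a non-collider on the walk. -/
def NonColliderAt (w : Walk V) (k : ℕ) : Prop :=
  w.Interior k ∧ ¬ (w.intoR (k-1) = true ∧ w.intoL k = true)

/-- The edge on the first-endpoint side of position `k` is directed out of
`vert k`, pointing to the neighbour `vert (k-1)` on the walk. -/
def PointsLeft (w : Walk V) (k : ℕ) : Prop :=
  w.intoL (k-1) = true ∧ w.intoR (k-1) = false

/-- The edge on the last-endpoint side of position `k` is directed out of
`vert k`, pointing to the neighbour `vert (k+1)` on the walk. -/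
def PointsRight (w : Walk V) (k : ℕ) : Prop :=
  w.intoL k = false ∧ w.intoR k = true

/-- The walk is a path: all its vertices are distinct. -/
def IsPath (w : Walk V) : Prop :=
  ∀ a, a ≤ w.len → ∀ b, b ≤ w.len → w.vert a = w.vert b → a = b

/-- The walk is into its first node (arrowhead at the first node). -/
def IntoFirst (w : Walk V) : Prop := 0 < w.len ∧ w.intoL 0 = true

/-- The walk is into its last node (arrowhead at the last node). -/
def IntoLast (w : Walk V) : Prop := 0 < w.len ∧ w.intoR (w.len - 1) = true

/-- The walk is σ-blocked by the set `C`. -/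
def SigmaBlocked (G : DMG V) (w : Walk V) (C : Set V) : Prop :=
  w.first ∈ C ∨ w.last ∈ C ∨
  (∃ k, w.ColliderAt k ∧ ¬ ∃ c ∈ C, G.Anc (w.vert k) c) ∨
  (∃ k, w.NonColliderAt k ∧ w.vert k ∈ C ∧
    ((w.PointsLeft k ∧ ¬ G.Scc (w.vert k) (w.vert (k-1))) ∨
     (w.PointsRight k ∧ ¬ G.Scc (w.vert k) (w.vert (k+1)))))

/-- The walk is d-blocked by the set `C`. -/
def DBlocked (G : DMG V) (w : Walk V) (C : Set V) : Prop :=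
  w.first ∈ C ∨ w.last ∈ C ∨
  (∃ k, w.ColliderAt k ∧ ¬ ∃ c ∈ C, G.Anc (w.vert k) c) ∨
  (∃ k, w.NonColliderAt k ∧ w.vert k ∈ C)

/-- The walk is inducing: every collider on it is an ancestor of one of the two
endpoints, and every non-endpoint non-collider only has outgoing directed edges
to its neighbours on the walk that lie in the same strongly connected component. -/
def Inducing (G : DMG V) (w : Walk V) : Prop :=
  (∀ k, w.ColliderAt k → G.Anc (w.vert k) w.first ∨ G.Anc (w.vert k) w.last) ∧
  (∀ k, w.NonColliderAt k →
    (w.PointsLeft k → G.Scc (w.vert k) (w.vert (k-1))) ∧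
    (w.PointsRight k → G.Scc (w.vert k) (w.vert (k+1))))

end Walk

namespace DMG

/-- `A` and `B` are σ-separated given `C` in `G`. -/
def SigmaSep (G : DMG V) (A B C : Set V) : Prop :=
  ∀ w : Walk V, w.ValidOn G → w.first ∈ A → w.last ∈ B → w.SigmaBlocked G C

/-- `A` and `B` are d-separated given `C` in `G`. -/
def DSep (G : DMG V) (A B C : Set V) : Prop :=
  ∀ w : Walk V, w.ValidOn G → w.first ∈ A → w.last ∈ B → w.DBlocked G C

/-- Nodes `i` and `j` are σ-connected given `C` in `G`. -/
def SigmaConnected (G : DMG V) (i j : V) (C : Set V) : Prop :=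
  ∃ w : Walk V, w.ValidOn G ∧ w.first = i ∧ w.last = j ∧ ¬ w.SigmaBlocked G C

/-- The σ-independence model of `G`. -/
def IMsigma (G : DMG V) : Set (Set V × Set V × Set V) :=
  { t | G.SigmaSep t.1 t.2.1 t.2.2 }

/-- The d-independence model of `G`. -/
def IMd (G : DMG V) : Set (Set V × Set V × Set V) :=
  { t | G.DSep t.1 t.2.1 t.2.2 }

/-- There is an inducing walk between `i` and `j` in `G`. -/
def InducingWalk (G : DMG V) (i j : V) : Prop :=
  ∃ w : Walk V, w.ValidOn G ∧ w.first = i ∧ w.last = j ∧ w.Inducing G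

/-- There is an inducing path between `i` and `j` in `G`. -/
def InducingPath (G : DMG V) (i j : V) : Prop :=
  ∃ w : Walk V, w.ValidOn G ∧ w.first = i ∧ w.last = j ∧ w.IsPath ∧ w.Inducing G

/-- There is an inducing walk between `i` and `j` in `G` that is into `j`. -/
def InducingWalkIntoLast (G : DMG V) (i j : V) : Prop :=
  ∃ w : Walk V, w.ValidOn G ∧ w.first = i ∧ w.last = j ∧ w.Inducing G ∧ w.IntoLast

/-- There is an inducing walk between `i` and `j` in `G` that is into both `i` and `j`. -/
def InducingWalkIntoBoth (G : DMG V) (i j : V) : Prop :=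
  ∃ w : Walk V, w.ValidOn G ∧ w.first = i ∧ w.last = j ∧ w.Inducing G ∧ w.IntoFirst ∧ w.IntoLast

/-- `G'` is an acyclification of `G`. -/
def IsAcyclification (G G' : DMG V) : Prop :=
  G'.Acyclic ∧
  (∀ i j, ¬ G.Scc i j →
    ((G'.dir i j ↔ ∃ k, G.Scc k j ∧ G.dir i k) ∧
     (G'.bi i j ↔ ∃ k, G.Scc k j ∧ G.bi i k))) ∧
  (∀ i j, i ≠ j → G.Scc i j → (G'.dir i j ∨ G'.dir j i ∨ G'.bi i j))

end DMG

/-- Edge marks of a partial ancestral graph. -/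
inductive Mark : Type
  | tail
  | arrow
  | circle
deriving DecidableEq

/-- A directed partial ancestral graph (DPAG). `mark i j` is the edge mark at `j`
on the edge between `i` and `j` (only meaningful when `adj i j`). Allowed edge
types are `→`, `←`, `↔`, `∘→`, `←∘` and `∘—∘`; there are no directed and no
almost directed cycles. -/
structure DPAG (V : Type*) where
  adj : V → V → Prop
  mark : V → V → Mark
  adj_symm : ∀ i j, adj i j → adj j i
  adj_irrefl : ∀ i, ¬ adj i i
  tail_imp_arrow : ∀ i j, adj i j → mark j i = Mark.tail → mark i j = Mark.arrow
  no_directed_cycle : ∀ i, ¬ Relation.TransGen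
    (fun a b => adj a b ∧ mark a b = Mark.arrow ∧ mark b a = Mark.tail) i i
  no_almost_directed_cycle : ∀ i j, Relation.ReflTransGen
    (fun a b => adj a b ∧ mark a b = Mark.arrow ∧ mark b a = Mark.tail) i j →
    ¬ (adj i j ∧ mark i j = Mark.arrow ∧ mark j i = Mark.arrow)

/-- A directed edge `i → j` with respect to raw adjacency/mark data. -/
def DirEdgeOn (adj : V → V → Prop) (mark : V → V → Mark) (i j : V) : Prop :=
  adj i j ∧ mark i j = Mark.arrow ∧ mark j i = Mark.tail

/-- The directed edge `i → j` is definitely visible, with respect to raw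
adjacency/mark data: there is a node `k` not adjacent to `j` such that either
the edge between `k` and `i` is into `i`, or there is a path between `k` and `i`
that is into `i` on which every non-endpoint node is a collider and a parent of `j`. -/
def DefinitelyVisibleOn (adj : V → V → Prop) (mark : V → V → Mark) (i j : V) : Prop :=
  DirEdgeOn adj mark i j ∧
  ∃ k, ¬ adj k j ∧
    ((adj k i ∧ mark k i = Mark.arrow) ∨
     (∃ n, ∃ p : ℕ → V, 0 < n ∧ p 0 = k ∧ p n = i ∧
       (∀ a, a ≤ n → ∀ b, b ≤ n → p a = p b → a = b) ∧
       (∀ m, m < n → adj (p m) (p (m+1))) ∧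
       mark (p (n-1)) i = Mark.arrow ∧
       (∀ m, 0 < m → m < n →
         (mark (p (m-1)) (p m) = Mark.arrow ∧ mark (p (m+1)) (p m) = Mark.arrow) ∧
         DirEdgeOn adj mark (p m) j)))

namespace DPAG

/-- `i → j` in `P`. -/
def DirEdge (P : DPAG V) (i j : V) : Prop := DirEdgeOn P.adj P.mark i j

/-- `i ↔ j` in `P`. -/
def BiEdge (P : DPAG V) (i j : V) : Prop :=
  P.adj i j ∧ P.mark i j = Mark.arrow ∧ P.mark j i = Mark.arrow

/-- `i *→ j` in `P`: an edge between `i` and `j` with an arrowhead at `j`. -/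
def ArrowAt (P : DPAG V) (i j : V) : Prop := P.adj i j ∧ P.mark i j = Mark.arrow

/-- The directed edge `i → j` of `P` is definitely visible in `P`. -/
def DefinitelyVisible (P : DPAG V) (i j : V) : Prop :=
  DefinitelyVisibleOn P.adj P.mark i j

/-- The DPAG `P` contains the DMG `G`. -/
def Contains (P : DPAG V) (G : DMG V) : Prop :=
  (∀ i j, i ≠ j → (P.adj i j ↔ G.InducingPath i j)) ∧
  (∀ i j, P.ArrowAt i j → ¬ G.Anc j i) ∧
  (∀ i j, P.DirEdge i j → G.Anc i j)

/-- `p 0, …, p n` is a possibly directed path in `P`: consecutive vertices are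
adjacent, no edge has an arrowhead at the endpoint nearer `p 0`, and all
vertices are distinct. -/
def PossiblyDirectedPathOn (P : DPAG V) (n : ℕ) (p : ℕ → V) : Prop :=
  (∀ k, k < n → P.adj (p k) (p (k+1)) ∧ P.mark (p (k+1)) (p k) ≠ Mark.arrow) ∧
  (∀ a, a ≤ n → ∀ b, b ≤ n → p a = p b → a = b)

/-- The path `p 0, …, p n` is uncovered: every consecutive triple is unshielded. -/
def UncoveredOn (P : DPAG V) (n : ℕ) (p : ℕ → V) : Prop :=
  ∀ k, k + 2 ≤ n → ¬ P.adj (p k) (p (k+2))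

/-- There is a possibly directed path from `i` to `j` in `P`. -/
def PDPath (P : DPAG V) (i j : V) : Prop :=
  ∃ n, ∃ p : ℕ → V, p 0 = i ∧ p n = j ∧ P.PossiblyDirectedPathOn n p

end DPAG

/-- JCI Assumption 1 (exogeneity): no system variable causes any context variable
(`K` is the set of context nodes; its complement is the set of system nodes). -/
def JCI1 (G : DMG V) (K : Set V) : Prop :=
  ∀ i k, i ∉ K → k ∈ K → ¬ G.dir i k

/-- JCI Assumption 2 (randomization): no pair of a system and a context variable
is confounded. -/
def JCI2 (G : DMG V) (K : Set V) : Prop :=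
  ∀ i k, i ∉ K → k ∈ K → ¬ G.BiEdge i k

/-- JCI Assumption 3 (genericity): every pair of distinct context variables is
connected by a bidirected edge and by no directed edge. -/
def JCI3 (G : DMG V) (K : Set V) : Prop :=
  ∀ k k', k ∈ K → k' ∈ K → k ≠ k' → (G.bi k k' ∧ ¬ G.dir k k')

/-- An independence model on `V`: a set of triples of subsets of `V`. -/
abbrev IndepModel (V : Type*) := Set (Set V × Set V × Set V)

/-- Background knowledge `Ψ` is compatible with the acyclification. -/
def CompatibleWithAcyclification (Ψ : DMG V → Prop) : Prop :=
  ∀ G : DMG V, Ψ G →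
    (∃ G', G.IsAcyclification G' ∧ Ψ G') ∧
    (∀ i j : V, G.Anc i j → ∃ G', G.IsAcyclification G' ∧ Ψ G' ∧ G'.Anc i j) ∧
    (∀ i j : V, ¬ G.Anc i j → ∀ G', G.IsAcyclification G' → Ψ G' → ¬ G'.Anc i j)

-- AUX SECTION (to be inserted before statement2)
attribute [local instance] Classical.propDecidable

lemma scc_refl (G : DMG V) (a : V) : G.Scc a a := ⟨.refl, .refl⟩

lemma scc_symm (G : DMG V) {a b : V} (h : G.Scc a b) : G.Scc b a := ⟨h.2, h.1⟩

/-- Acyclification of `G` determined by a numbering `fo` of the vertices: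
cross-SCC edges are forced, within-SCC pairs are directed according to `fo`
when the values differ and bidirected otherwise. -/
noncomputable def acy (G : DMG V) (fo : V → ℕ) : DMG V where
  dir a b := (¬ G.Scc a b ∧ ∃ k, G.Scc k b ∧ G.dir a k) ∨ (G.Scc a b ∧ fo a < fo b)
  bi a b := (¬ G.Scc a b ∧ ∃ k, G.Scc k b ∧ G.bi a k) ∨ (a ≠ b ∧ G.Scc a b ∧ fo a = fo b)
  dir_irrefl := by
    intro a h
    rcases h with h | h
    · exact h.1 (scc_refl G a)
    · exact lt_irrefl _ h.2
  bi_irrefl := by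
    intro a h
    rcases h with h | h
    · exact h.1 (scc_refl G a)
    · exact h.1 rfl

lemma acy_dir_anc (G : DMG V) (fo : V → ℕ) {a b : V} (h : (acy G fo).dir a b) :
    G.Anc a b := by
  rcases h with ⟨_, k, hk, hd⟩ | h
  · exact (Relation.ReflTransGen.single hd).trans hk.1
  · exact h.1.1

lemma acy_key (G : DMG V) (fo : V → ℕ) {a c : V}
    (h : Relation.ReflTransGen (acy G fo).dir a c) :
    G.Anc a c ∧ (G.Anc c a → fo a ≤ fo c) := by
  induction h using Relation.ReflTransGen.head_induction_on with
  | refl => exact ⟨.refl, fun _ => le_refl _⟩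
  | @head x y h' hrest ih =>
    have hxy : G.Anc x y := acy_dir_anc G fo h'
    refine ⟨hxy.trans ih.1, fun hcx => ?_⟩
    have hyx : G.Anc y x := ih.1.trans hcx
    have hscc : G.Scc x y := ⟨hxy, hyx⟩
    rcases h' with h' | h'
    · exact absurd hscc h'.1
    · have hyc : fo y ≤ fo c := ih.2 (hcx.trans hxy)
      omega

lemma acy_acyclic (G : DMG V) (fo : V → ℕ) : (acy G fo).Acyclic := by
  intro a b hd hanc
  have hab : G.Anc a b := acy_dir_anc G fo hd
  have hk := acy_key G fo hanc
  have hscc : G.Scc a b := ⟨hab, hk.1⟩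
  rcases hd with hd | hd
  · exact hd.1 hscc
  · have := hk.2 hab
    omega

lemma acy_isAcyclification (G : DMG V) (fo : V → ℕ) :
    G.IsAcyclification (acy G fo) := by
  refine ⟨acy_acyclic G fo, ?_, ?_⟩
  · intro a b hns
    constructor
    · constructor
      · rintro (h | h)
        · exact h.2
        · exact absurd h.1 hns
      · intro hex; exact Or.inl ⟨hns, hex⟩
    · constructor
      · rintro (h | h)
        · exact h.2
        · exact absurd h.2.1 hns
      · intro hex; exact Or.inl ⟨hns, hex⟩
  · intro a b hne hscc
    rcases lt_trichotomy (fo a) (fo b) with hlt | heq | hgt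
    · exact Or.inl (Or.inr ⟨hscc, hlt⟩)
    · exact Or.inr (Or.inr (Or.inr ⟨hne, hscc, heq⟩))
    · exact Or.inr (Or.inl (Or.inr ⟨scc_symm G hscc, hgt⟩))

/-- First occurrence of a vertex on a finite walk, `n+1` if absent. -/
noncomputable def firstOcc (n : ℕ) (v : ℕ → V) (a : V) : ℕ :=
  if h : ∃ k, k ≤ n ∧ v k = a then Nat.find h else n + 1

lemma firstOcc_le {n : ℕ} {v : ℕ → V} {k : ℕ} (hk : k ≤ n) : firstOcc n v (v k) ≤ k := by
  rw [firstOcc, dif_pos ⟨k, hk, rfl⟩]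
  exact Nat.find_min' _ ⟨hk, rfl⟩

lemma firstOcc_spec {n : ℕ} {v : ℕ → V} {k : ℕ} (hk : k ≤ n) :
    firstOcc n v (v k) ≤ n ∧ v (firstOcc n v (v k)) = v k := by
  rw [firstOcc, dif_pos ⟨k, hk, rfl⟩]
  exact Nat.find_spec (⟨k, hk, rfl⟩ : ∃ l, l ≤ n ∧ v l = v k)

lemma exists_walk {d : V → V → Prop} {i j : V} (h : Relation.ReflTransGen d i j) :
    ∃ n, ∃ v : ℕ → V, v 0 = i ∧ v n = j ∧ ∀ k < n, d (v k) (v (k+1)) := by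
  induction h with
  | refl => exact ⟨0, fun _ => i, rfl, rfl, fun k hk => absurd hk (Nat.not_lt_zero k)⟩
  | @tail b c hbc hlast ih =>
    obtain ⟨n, v, h0, hn, hs⟩ := ih
    refine ⟨n + 1, fun k => if k ≤ n then v k else c, ?_, ?_, ?_⟩
    · simp [h0]
    · simp
    · intro k hk
      rcases Nat.lt_or_ge k n with hkn | hkn
      · simpa [Nat.le_of_lt hkn, Nat.succ_le_of_lt hkn] using hs k hkn
      · have hkeq : k = n := by omega
        subst hkeq
        simpa [hn] using hlast

/-- if `i ∈ an(G,j)`, then there exists an acyclification `G'` of `G`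
with `i ∈ an(G',j)`. -/
theorem statement2 (G : DMG V) (i j : V) (h : G.Anc i j) :
    ∃ G' : DMG V, G.IsAcyclification G' ∧ G'.Anc i j := by
  classical
  obtain ⟨n, v, hv0, hvn, hstep⟩ := exists_walk h
  set fo := firstOcc n v with hfo
  refine ⟨acy G fo, acy_isAcyclification G fo, ?_⟩
  -- walk segments are ancestral
  have seg : ∀ a b, a ≤ b → b ≤ n → G.Anc (v a) (v b) := by
    intro a b hab
    induction b, hab using Nat.le_induction with
    | base => intro _; exact .refl
    | succ c hc ih =>
      intro hcn
      exact (ih (by omega)).tail (hstep c (by omega))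
  -- first occurrence of a fresh vertex is its index
  have fresh_fo : ∀ k, k ≤ n → (∀ l, l < k → ¬ G.Scc (v l) (v k)) → fo (v k) = k := by
    intro k hk hfresh
    refine le_antisymm (firstOcc_le hk) ?_
    by_contra hlt
    push_neg at hlt
    have hsp := firstOcc_spec (v := v) hk
    exact hfresh _ hlt (by rw [← hfo] at hsp; rw [hsp.2]; exact scc_refl G _)
  have fo_gt : ∀ k m, k ≤ n → m ≤ n → (∀ l, l < k → ¬ G.Scc (v l) (v k)) →
      v m ≠ v k → G.Scc (v m) (v k) → fo (v k) < fo (v m) := by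
    intro k m hk hm hfresh hne hscc
    have hsp := firstOcc_spec (v := v) hm
    rw [← hfo] at hsp
    rw [fresh_fo k hk hfresh]
    rcases Nat.lt_or_ge (fo (v m)) k with hlt | hge
    · exact absurd (by rw [hsp.2]; exact hscc) (hfresh _ hlt)
    · rcases Nat.eq_or_lt_of_le hge with heq | hlt
      · have hvk : v k = v m := by rw [heq]; exact hsp.2
        exact absurd hvk.symm hne
      · exact hlt
  -- main induction on distance to the end of the walk
  have main : ∀ t k, n - k = t → k ≤ n → (∀ l, l < k → ¬ G.Scc (v l) (v k)) →
      Relation.ReflTransGen (acy G fo).dir (v k) j := by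
    intro t
    induction t using Nat.strong_induction_on with
    | _ t ih =>
      intro k ht hkn hfresh
      set m := Nat.findGreatest (fun m => m ≤ n ∧ G.Scc (v m) (v k)) n with hmdef
      have hP : k ≤ n ∧ G.Scc (v k) (v k) := ⟨hkn, scc_refl G _⟩
      have hkm : k ≤ m := Nat.le_findGreatest (P := fun m => m ≤ n ∧ G.Scc (v m) (v k)) hkn hP
      have hmn : m ≤ n := Nat.findGreatest_le (P := fun m => m ≤ n ∧ G.Scc (v m) (v k)) n
      have hmP : m ≤ n ∧ G.Scc (v m) (v k) :=
        Nat.findGreatest_spec (P := fun m => m ≤ n ∧ G.Scc (v m) (v k)) hkn hP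
      have hmax : ∀ l, m < l → l ≤ n → ¬ G.Scc (v l) (v k) := by
        intro l h1 h2 hS
        exact Nat.findGreatest_is_greatest (P := fun m => m ≤ n ∧ G.Scc (v m) (v k)) h1 h2 ⟨h2, hS⟩
      have step1 : Relation.ReflTransGen (acy G fo).dir (v k) (v m) := by
        by_cases hvv : v k = v m
        · rw [hvv]
        · exact Relation.ReflTransGen.single (Or.inr ⟨scc_symm G hmP.2,
            fo_gt k m hkn hmn hfresh (fun e => hvv e.symm) hmP.2⟩)
      rcases Nat.eq_or_lt_of_le hmn with hmeq | hmlt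
      · rw [hmeq, hvn] at step1
        exact step1
      · have hedge : (acy G fo).dir (v m) (v (m+1)) := by
          refine Or.inl ⟨?_, v (m+1), scc_refl G _, hstep m hmlt⟩
          intro hS
          exact hmax (m+1) (by omega) (by omega)
            ⟨hS.2.trans hmP.2.1, seg k (m+1) (by omega) (by omega)⟩
        have hfresh' : ∀ l, l < m + 1 → ¬ G.Scc (v l) (v (m+1)) := by
          intro l hl hS
          rcases Nat.lt_or_ge l k with hlk | hkl
          · exact hmax (m+1) (by omega) (by omega)
              ⟨hS.2.trans (seg l k (by omega) (by omega)), seg k (m+1) (by omega) (by omega)⟩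
          · exact hmax (m+1) (by omega) (by omega)
              ⟨hS.2.trans ((seg l m (by omega) (by omega)).trans hmP.2.1),
               seg k (m+1) (by omega) (by omega)⟩
        have tail := ih (n - (m+1)) (by omega) (m+1) rfl (by omega) hfresh'
        exact (step1.tail hedge).trans tail
  have := main (n - 0) 0 rfl (Nat.zero_le n) (fun l hl => absurd hl (Nat.not_lt_zero l))
  rw [hv0] at this
  exact this


end CausalGraphs
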